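/- arXiv:1105.6041 — 9 statements merged into one kernel-verified Lean document; each statement's English description precedes it below -/
import Mathlib

section
/- If a real number t satisfies t ≥ e^{-C} and t < δ(1 + C + ln t), where δ and C are real constants with δ > e^{-C}, then t ≤ (1 + e^{-1})·δ·(C + ln((1+e)·δ)). -/
/-!
The tangent line of `log` at `a = (1 + e) δ` gives `log t ≤ t / a + log a - 1`. Substituting this
into `t < δ (1 + C + log t)` leaves `t < δ (C + log a) + t / (1 + e)`, and solving for `t` gives the
bound. Here `δ > 0` because `t ≥ e^{-C}` makes `1 + C + log t ≥ 1`.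
-/

namespace Real

theorem log_le_div_add_log_sub_one {x a : ℝ} (hx : 0 < x) (ha : 0 < a) :
    log x ≤ x / a + log a - 1 := by
  have := log_le_sub_one_of_pos (div_pos hx ha)
  rw [log_div hx.ne' ha.ne'] at this
  linarith

theorem lt_one_add_inv_mul_of_lt_mul_one_add_add_log {t δ C k : ℝ} (ht : 0 < t) (hδ : 0 < δ)
    (hk : 0 < k) (hlt : t < δ * (1 + C + log t)) :
    t < (1 + k⁻¹) * δ * (C + log ((1 + k) * δ)) := by
  set a := (1 + k) * δ
  have hstep : t < δ * (C + log a) + t / (1 + k) := by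
    have hδt : δ * (t / a) = t / (1 + k) := by simp only [a]; field_simp
    calc t < δ * (1 + C + log t) := hlt
      _ ≤ δ * (1 + C + (t / a + log a - 1)) := by
        gcongr; exact log_le_div_add_log_sub_one ht (by positivity)
      _ = δ * (C + log a) + t / (1 + k) := by rw [← hδt]; ring
  have hkey : t * k < (1 + k) * (δ * (C + log a)) := by
    have : t * k = (1 + k) * (t - t / (1 + k)) := by field_simp; ring
    rw [this]
    gcongr
    linarith
  calc t = t * k / k := by field_simp
    _ < (1 + k) * (δ * (C + log a)) / k := by gcongr
    _ = (1 + k⁻¹) * δ * (C + log a) := by field_simp; ring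

theorem pos_of_exp_neg_le_of_lt_mul_one_add_add_log {t δ C : ℝ} (ht : exp (-C) ≤ t)
    (hlt : t < δ * (1 + C + log t)) : 0 < δ := by
  have ht0 : 0 < t := (exp_pos _).trans_le ht
  have hlogt : -C ≤ log t := (le_log_iff_exp_le ht0).mpr ht
  exact pos_of_mul_pos_left (ht0.trans hlt) (by linarith)

end Real

theorem perceptron_dynamic_margin_lemma_general (t δ C : ℝ)
    (ht : t ≥ Real.exp (-C))
    (hlt : t < δ * (1 + C + Real.log t)) :
    t ≤ (1 + Real.exp (-1)) * δ * (C + Real.log ((1 + Real.exp 1) * δ)) := by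
  have ht0 : 0 < t := (Real.exp_pos _).trans_le ht
  have hδ0 := Real.pos_of_exp_neg_le_of_lt_mul_one_add_add_log ht hlt
  rw [Real.exp_neg]
  exact (Real.lt_one_add_inv_mul_of_lt_mul_one_add_add_log ht0 hδ0 (Real.exp_pos 1) hlt).le

theorem perceptron_dynamic_margin_lemma (t δ C : ℝ)
    (hδ : δ > Real.exp (-C))
    (ht : t ≥ Real.exp (-C))
    (hlt : t < δ * (1 + C + Real.log t)) :
    t ≤ (1 + Real.exp (-1)) * δ * (C + Real.log ((1 + Real.exp 1) * δ)) :=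
  perceptron_dynamic_margin_lemma_general t δ C ht hlt
end

section
/- Suppose a_{t+1} = a_t + y_k in a real inner product space, ‖y_k‖ ≤ R, ‖a_t‖ ≥ γ_d·t with γ_d > 0, t ≥ ε^{-1}·R²/γ_d² for some 0 < ε ≤ 1, and a_t·y_k ≤ (1−ε)·‖a_t‖²/t. Then ‖a_{t+1}‖²/(t+1) ≥ a_{t+1}·y_k. -/
open scoped InnerProductSpace

set_option maxHeartbeats 1600000 in
theorem pdm_update_violation
    {E : Type*} [NormedAddCommGroup E] [InnerProductSpace ℝ E]
    (a a' y : E) (t : ℕ) (R γd ε : ℝ)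
    (hupd : a' = a + y)
    (hR : ‖y‖ ≤ R)
    (hγ : γd > 0)
    (hlow : ‖a‖ ≥ γd * t)
    (hε : 0 < ε) (hε1 : ε ≤ 1)
    (ht : (t : ℝ) ≥ ε⁻¹ * R ^ 2 / γd ^ 2)
    (hmis : ⟪a, y⟫_ℝ ≤ (1 - ε) * ‖a‖ ^ 2 / t) :
    ‖a'‖ ^ 2 / ((t : ℝ) + 1) ≥ ⟪a', y⟫_ℝ := by
  have hy2 : ‖y‖ ^ 2 ≤ R ^ 2 := by nlinarith [norm_nonneg y]
  have ha2 : γd ^ 2 * (t : ℝ) ^ 2 ≤ ‖a‖ ^ 2 := by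
    nlinarith [norm_nonneg a, mul_nonneg hγ.le (Nat.cast_nonneg t : (0:ℝ) ≤ t)]
  have hdiv : ε⁻¹ * R ^ 2 ≤ (t : ℝ) * γd ^ 2 :=
    (div_le_iff₀ (by positivity : (0:ℝ) < γd ^ 2)).mp ht
  have hRt : R ^ 2 ≤ ε * γd ^ 2 * t := by
    have hεi : ε * ε⁻¹ = 1 := mul_inv_cancel₀ hε.ne'
    nlinarith [mul_le_mul_of_nonneg_left hdiv hε.le]
  have hexp : ‖a'‖ ^ 2 = ‖a‖ ^ 2 + 2 * ⟪a, y⟫_ℝ + ‖y‖ ^ 2 := by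
    rw [hupd, norm_add_sq_real]
  have hinn : ⟪a', y⟫_ℝ = ⟪a, y⟫_ℝ + ‖y‖ ^ 2 := by
    rw [hupd, inner_add_left, real_inner_self_eq_norm_sq]
  rw [ge_iff_le, le_div_iff₀ (by positivity : (0:ℝ) < (t : ℝ) + 1), hexp, hinn]
  -- reduce to : (t-1)*⟪a,y⟫ + t*‖y‖² ≤ ‖a‖²
  rcases Nat.eq_zero_or_pos t with h0 | hpos
  · subst h0
    have hy0 : ‖y‖ ^ 2 = 0 := by
      simp only [Nat.cast_zero, mul_zero] at hRt
      nlinarith [sq_nonneg ‖y‖]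
    have hy : y = 0 := by
      have := (pow_eq_zero_iff (n := 2) (by norm_num)).mp hy0
      simpa using this
    subst hy
    simp only [inner_zero_right, norm_zero]
    nlinarith [sq_nonneg ‖a‖]
  · have ht0 : (0:ℝ) < t := by exact_mod_cast hpos
    have hmis' : ⟪a, y⟫_ℝ * t ≤ (1 - ε) * ‖a‖ ^ 2 := by
      rwa [le_div_iff₀ ht0] at hmis
    have h1 : (t:ℝ) * ‖y‖ ^ 2 ≤ t * R ^ 2 := by nlinarith
    have h2 : (t:ℝ) * R ^ 2 ≤ ε * (γd ^ 2 * t ^ 2) := by nlinarith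
    have h3 : ε * (γd ^ 2 * t ^ 2) ≤ ε * ‖a‖ ^ 2 := by nlinarith
    rcases le_or_gt ⟪a, y⟫_ℝ 0 with hneg | hposI
    · have ht1 : (1:ℝ) ≤ t := by exact_mod_cast hpos
      have h4 : (t:ℝ) * ⟪a, y⟫_ℝ ≤ ⟪a, y⟫_ℝ := by nlinarith
      nlinarith [sq_nonneg ‖a‖]
    · nlinarith [sq_nonneg ‖a‖]
end

section
/- Consider the perceptron with fixed margin condition: a₀ = 0, a_{t+1} = a_t + y_{k(t)} where each update pattern satisfies a_t·y_{k(t)} ≤ (1−ε)·γ_d·‖a_t‖, all patterns satisfy ‖y_k‖ ≤ R, and some unit vector u satisfies u·y_k ≥ γ_d > 0 for all k, with 0 < ε ≤ 1. Then the number t of updates satisfies t ≤ ((1+e^{-1})/(2ε))·(R²/γ_d²)·{ 4·(γ_d/R)·(1 − (γ_d/R)(1−ε)) + ln( ((1+e)/ε)·(R/γ_d)·(1 − (γ_d/R)(1−ε)) ) }. -/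
/-!
With `β = (1 - ε) γ`, the misclassification condition gives
`‖a (t+1)‖² ≤ (‖a t‖ + β)² + (R² - β²)`, so `‖a t‖` is dominated by the sequence
`M 0 = 0`, `M (t+1) = √((M t + β)² + R² - β²)`. Each step of `M` adds at most
`β + (R² - β²) / (2 (M t + β))`, and `M t` is at least `R √t` (from the recursion) and at
least `γ t` (since `‖a t‖ ≥ ⟪u, a t⟫ ≥ γ t`). Summing the excess with the first bound up to
`t₀ = ⌈R²/γ²⌉` and with the second beyond it, and comparing with `γ T ≤ M T`, gives in the
variable `s = (γ/R)² T` an inequality `ε s ≤ c + b log s` with `b = (R² - β²) / (2 R²)`.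
Replacing `log s` by its tangent line at `(1 + e) b / ε` makes it linear in `s`, which yields
the bound.
-/

open scoped InnerProductSpace
open Real Finset

theorem sqrt_sq_add_le_add_div {x D : ℝ} (hx : 0 < x) (hD : 0 ≤ D) :
    √(x ^ 2 + D) ≤ x + D / (2 * x) := by
  have hsq : (x + D / (2 * x)) ^ 2 = x ^ 2 + D + (D / (2 * x)) ^ 2 := by field_simp; ring
  exact sqrt_le_iff.2 ⟨by positivity, by nlinarith [sq_nonneg (D / (2 * x))]⟩

theorem sum_Ioc_one_div_sqrt_le {n : ℕ} (hn : 1 ≤ n) :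
    ∑ t ∈ Ioc 0 n, 1 / √(t : ℝ) ≤ 2 * √(n : ℝ) - 1 := by
  induction n, hn using Nat.le_induction with
  | base => norm_num
  | succ n hn ih =>
    rw [sum_Ioc_succ_top (Nat.zero_le _)]
    set a := √(n : ℝ)
    set b := √((n + 1 : ℕ) : ℝ)
    have hb : 0 < b := sqrt_pos.2 (by positivity)
    have hab : b ^ 2 = a ^ 2 + 1 := by
      rw [sq_sqrt (by positivity), sq_sqrt (by positivity)]; push_cast; ring
    have step : 1 / b ≤ 2 * b - 2 * a := by
      rw [div_le_iff₀ hb]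
      nlinarith [sq_nonneg (b - a), sqrt_nonneg (n : ℝ)]
    linarith

theorem sum_Ioc_one_div_le_log_sub_log {m n : ℕ} (hm : 1 ≤ m) (hmn : m ≤ n) :
    ∑ t ∈ Ioc m n, 1 / (t : ℝ) ≤ log n - log m := by
  induction n, hmn using Nat.le_induction with
  | base => simp
  | succ n hmn ih =>
    rw [sum_Ioc_succ_top hmn]
    have hn : (0 : ℝ) < n := by exact_mod_cast hm.trans hmn
    have step : 1 / ((n + 1 : ℕ) : ℝ) ≤ log ((n + 1 : ℕ) : ℝ) - log n := by
      rw [← log_div (by positivity) hn.ne']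
      convert one_sub_inv_le_log_of_pos (x := ((n + 1 : ℕ) : ℝ) / n) (by positivity) using 1
      field_simp
      push_cast; ring
    linarith

theorem sum_Ioc_one_div_le_sqrt_add_log {f : ℕ → ℝ} {R γ : ℝ} {t₀ n : ℕ} (hR : 0 < R) (hγ : 0 < γ)
    (ht₀ : 1 ≤ t₀) (hn : t₀ ≤ n) (hfR : ∀ t : ℕ, R * √(t : ℝ) ≤ f t)
    (hfγ : ∀ t ≤ n, γ * (t : ℝ) ≤ f t) :
    ∑ t ∈ Ioc 0 n, 1 / f t ≤ (2 * √(t₀ : ℝ) - 1) / R + (log n - log t₀) / γ := by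
  rw [← sum_Ioc_consecutive _ (Nat.zero_le t₀) hn]
  gcongr ?_ + ?_
  · calc ∑ t ∈ Ioc 0 t₀, 1 / f t ≤ ∑ t ∈ Ioc 0 t₀, 1 / √(t : ℝ) / R := by
          refine sum_le_sum fun t ht => ?_
          have : 0 < √(t : ℝ) := sqrt_pos.2 (by exact_mod_cast (mem_Ioc.1 ht).1)
          rw [div_div, mul_comm]
          exact one_div_le_one_div_of_le (by positivity) (hfR t)
      _ ≤ (2 * √(t₀ : ℝ) - 1) / R := by
          rw [← sum_div]; gcongr; exact sum_Ioc_one_div_sqrt_le ht₀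
  · calc ∑ t ∈ Ioc t₀ n, 1 / f t ≤ ∑ t ∈ Ioc t₀ n, 1 / (t : ℝ) / γ := by
          refine sum_le_sum fun t ht => ?_
          have ht' := mem_Ioc.1 ht
          have : (0 : ℝ) < t := Nat.cast_pos.2 (by omega)
          rw [div_div, mul_comm]
          exact one_div_le_one_div_of_le (by positivity) (hfγ t ht'.2)
      _ ≤ (log n - log t₀) / γ := by
          rw [← sum_div]; gcongr; exact sum_Ioc_one_div_le_log_sub_log ht₀ hn

noncomputable def normMajorant (β R : ℝ) : ℕ → ℝ
  | 0 => 0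
  | t + 1 => √((normMajorant β R t + β) ^ 2 + (R ^ 2 - β ^ 2))

namespace normMajorant

variable {β R : ℝ}

theorem nonneg (t : ℕ) : 0 ≤ normMajorant β R t := by
  cases t with
  | zero => exact le_rfl
  | succ t => exact sqrt_nonneg _

theorem sq_succ (hβR : β ^ 2 ≤ R ^ 2) (t : ℕ) :
    normMajorant β R (t + 1) ^ 2 = (normMajorant β R t + β) ^ 2 + (R ^ 2 - β ^ 2) :=
  sq_sqrt (add_nonneg (sq_nonneg _) (sub_nonneg.2 hβR))

theorem one (hR : 0 ≤ R) : normMajorant β R 1 = R := by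
  simp [normMajorant, sqrt_sq hR]

theorem le_of_sq_succ_le {x : ℕ → ℝ} {T : ℕ} (hβ : 0 ≤ β) (hx0 : x 0 = 0) (hx : ∀ t, 0 ≤ x t)
    (hstep : ∀ t < T, x (t + 1) ^ 2 ≤ (x t + β) ^ 2 + (R ^ 2 - β ^ 2)) :
    ∀ t ≤ T, x t ≤ normMajorant β R t
  | 0, _ => hx0.le
  | t + 1, ht => by
    have ih := le_of_sq_succ_le hβ hx0 hx hstep t (by omega)
    refine (le_abs_self _).trans (abs_le_sqrt ((hstep t ht).trans ?_))
    have := hx t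
    gcongr

theorem sqrt_mul_le (hβ : 0 ≤ β) (hR : 0 ≤ R) (hβR : β ^ 2 ≤ R ^ 2) (t : ℕ) :
    R * √(t : ℝ) ≤ normMajorant β R t := by
  have hsq : ∀ t : ℕ, t * R ^ 2 ≤ normMajorant β R t ^ 2 := by
    intro t
    induction t with
    | zero => simp [sq_nonneg]
    | succ t ih =>
      rw [sq_succ hβR]
      push_cast
      nlinarith [mul_nonneg hβ (nonneg (β := β) (R := R) t)]
  rw [← sq_le_sq₀ (by positivity) (nonneg t), mul_pow, sq_sqrt (by positivity), mul_comm]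
  exact hsq t

theorem succ_le (hβR : β ^ 2 ≤ R ^ 2) {t : ℕ} (ht : 0 < normMajorant β R t + β) :
    normMajorant β R (t + 1)
      ≤ normMajorant β R t + β + (R ^ 2 - β ^ 2) / (2 * (normMajorant β R t + β)) :=
  sqrt_sq_add_le_add_div ht (sub_nonneg.2 hβR)

theorem succ_le_add_sum (hβ : 0 ≤ β) (hR : 0 < R) (hβR : β ^ 2 ≤ R ^ 2) (n : ℕ) :
    normMajorant β R (n + 1)
      ≤ R + β * n + (R ^ 2 - β ^ 2) / 2 * ∑ t ∈ Ioc 0 n, 1 / (normMajorant β R t + β) := by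
  induction n with
  | zero => simp [one hR.le]
  | succ n ih =>
    have hpos : 0 < normMajorant β R (n + 1) + β := by
      have := sqrt_mul_le hβ hR.le hβR (n + 1)
      have : 0 < R * √((n + 1 : ℕ) : ℝ) := mul_pos hR (sqrt_pos.2 (by positivity))
      linarith
    have hdiv : (R ^ 2 - β ^ 2) / (2 * (normMajorant β R (n + 1) + β))
        = (R ^ 2 - β ^ 2) / 2 * (1 / (normMajorant β R (n + 1) + β)) := by
      rw [div_mul_div_comm, mul_one]
    rw [sum_Ioc_succ_top (Nat.zero_le _), mul_add]
    push_cast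
    linarith [succ_le hβR hpos]

end normMajorant

section Perceptron

variable {E : Type*} [NormedAddCommGroup E] [InnerProductSpace ℝ E]

theorem norm_add_sq_le_of_inner_le {x v : E} {β R : ℝ} (hxv : ⟪x, v⟫_ℝ ≤ β * ‖x‖)
    (hv : ‖v‖ ≤ R) : ‖x + v‖ ^ 2 ≤ (‖x‖ + β) ^ 2 + (R ^ 2 - β ^ 2) := by
  rw [norm_add_sq_real]
  nlinarith [pow_le_pow_left₀ (norm_nonneg v) hv 2]

theorem mul_le_inner_of_margin {a v : ℕ → E} {u : E} {γ : ℝ} {T : ℕ} (ha0 : a 0 = 0)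
    (hupd : ∀ t < T, a (t + 1) = a t + v t) (hmargin : ∀ t < T, γ ≤ ⟪u, v t⟫_ℝ) :
    ∀ t ≤ T, γ * t ≤ ⟪u, a t⟫_ℝ
  | 0, _ => by simp [ha0]
  | t + 1, ht => by
    have ih := mul_le_inner_of_margin ha0 hupd hmargin t (by omega)
    rw [hupd t ht, inner_add_right]
    push_cast
    linarith [hmargin t ht]

end Perceptron

theorem mul_succ_le_of_sq_succ_le {x : ℕ → ℝ} {β R γ : ℝ} {t₀ n : ℕ} (hβ : 0 ≤ β) (hR : 0 < R)
    (hβR : β ^ 2 ≤ R ^ 2) (hγ : 0 < γ) (ht₀ : 1 ≤ t₀) (hn : t₀ ≤ n) (hx0 : x 0 = 0)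
    (hx : ∀ t, 0 ≤ x t) (hstep : ∀ t < n + 1, x (t + 1) ^ 2 ≤ (x t + β) ^ 2 + (R ^ 2 - β ^ 2))
    (hγx : ∀ t ≤ n + 1, γ * t ≤ x t) :
    γ * (n + 1) ≤ R + β * n
      + (R ^ 2 - β ^ 2) / 2 * ((2 * √(t₀ : ℝ) - 1) / R + (log n - log t₀) / γ) := by
  have hxM := normMajorant.le_of_sq_succ_le hβ hx0 hx hstep
  have hsum : ∑ t ∈ Ioc 0 n, 1 / (normMajorant β R t + β)
      ≤ (2 * √(t₀ : ℝ) - 1) / R + (log n - log t₀) / γ :=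
    sum_Ioc_one_div_le_sqrt_add_log hR hγ ht₀ hn
      (fun t => (normMajorant.sqrt_mul_le hβ hR.le hβR t).trans (le_add_of_nonneg_right hβ))
      (fun t ht => ((hγx t (by omega)).trans (hxM t (by omega))).trans (le_add_of_nonneg_right hβ))
  calc γ * (n + 1) ≤ normMajorant β R (n + 1) := by
        exact_mod_cast (hγx (n + 1) le_rfl).trans (hxM (n + 1) le_rfl)
    _ ≤ _ := normMajorant.succ_le_add_sum hβ hR hβR n
    _ ≤ _ := by gcongr

theorem mul_sq_le_of_mul_succ_le {γ R ε : ℝ} {n : ℕ} (hγ : 0 < γ) (hγR : γ ≤ R) (hε : 0 < ε)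
    (hε1 : ε ≤ 1) (hn : ⌈R ^ 2 / γ ^ 2⌉₊ ≤ n)
    (h : γ * (n + 1) ≤ R + (1 - ε) * γ * n + (R ^ 2 - ((1 - ε) * γ) ^ 2) / 2 *
      ((2 * √(⌈R ^ 2 / γ ^ 2⌉₊ : ℝ) - 1) / R + (log n - log ⌈R ^ 2 / γ ^ 2⌉₊) / γ)) :
    ε * ((γ / R) ^ 2 * (n + 1)) ≤ γ / R * (1 - γ / R * (1 - ε)) +
      (1 - ((1 - ε) * (γ / R)) ^ 2) / 2 * (2 + (γ / R) ^ 2 - γ / R + log ((γ / R) ^ 2 * (n + 1))) := by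
  set ρ := R ^ 2 / γ ^ 2 with hρ
  set t₀ := ⌈ρ⌉₊
  have hR : 0 < R := hγ.trans_le hγR
  have hρ0 : 0 < ρ := by positivity
  have ht₀ : 1 ≤ t₀ := Nat.one_le_ceil_iff.2 hρ0
  have hn0 : (0 : ℝ) < n := by exact_mod_cast ht₀.trans hn
  have hsqrt : √(t₀ : ℝ) ≤ R / γ + γ / (2 * R) := by
    refine sqrt_le_iff.2 ⟨by positivity, ?_⟩
    have : (R / γ + γ / (2 * R)) ^ 2 = ρ + 1 + (γ / (2 * R)) ^ 2 := by
      rw [hρ]; field_simp; ring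
    nlinarith [Nat.ceil_lt_add_one hρ0.le, sq_nonneg (γ / (2 * R))]
  have hlog : log n - log t₀ ≤ log ((γ / R) ^ 2 * (n + 1)) := by
    have : (γ / R) ^ 2 * (n + 1) = (n + 1) / ρ := by rw [hρ]; field_simp
    rw [this, log_div (by positivity) hρ0.ne']
    gcongr
    · linarith
    · exact Nat.le_ceil ρ
  have hD : 0 ≤ R ^ 2 - ((1 - ε) * γ) ^ 2 := by
    have hβ : 0 ≤ (1 - ε) * γ := mul_nonneg (by linarith) hγ.le
    exact sub_nonneg.2 (pow_le_pow_left₀ hβ (by nlinarith) 2)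
  have h' : γ * (n + 1) ≤ R + (1 - ε) * γ * n + (R ^ 2 - ((1 - ε) * γ) ^ 2) / 2 *
      ((2 * (R / γ + γ / (2 * R)) - 1) / R + log ((γ / R) ^ 2 * (n + 1)) / γ) := by
    refine h.trans ?_
    gcongr
  have key : γ / R * (1 - γ / R * (1 - ε)) + (1 - ((1 - ε) * (γ / R)) ^ 2) / 2 *
      (2 + (γ / R) ^ 2 - γ / R + log ((γ / R) ^ 2 * (n + 1))) - ε * ((γ / R) ^ 2 * (n + 1))
      = γ / R ^ 2 * (R + (1 - ε) * γ * n + (R ^ 2 - ((1 - ε) * γ) ^ 2) / 2 *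
      ((2 * (R / γ + γ / (2 * R)) - 1) / R + log ((γ / R) ^ 2 * (n + 1)) / γ) - γ * (n + 1)) := by
    field_simp
    ring
  linarith [mul_nonneg (by positivity : 0 ≤ γ / R ^ 2) (sub_nonneg.2 h')]

noncomputable def updateBound (ε g : ℝ) : ℝ :=
  (1 + exp (-1)) / (2 * ε) *
    (4 * g * (1 - g * (1 - ε)) + log ((1 + exp 1) / ε * g⁻¹ * (1 - g * (1 - ε))))

theorem log_add_one_sub_le_log_mul_inv {c g : ℝ} (hc : 0 < c) (hg : 0 < g) :
    log c + 1 - g ≤ log (c * g⁻¹) := by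
  rw [log_mul hc.ne' (inv_ne_zero hg.ne'), log_inv]
  linarith [log_le_sub_one_of_pos hg]

theorem log_le_div_sub_one_add_log {s c : ℝ} (hs : 0 < s) (hc : 0 < c) :
    log s ≤ s / c - 1 + log c := by
  have := log_le_sub_one_of_pos (div_pos hs hc)
  rw [log_div hs.ne' hc.ne'] at this
  linarith

theorem one_le_log_one_add_exp_one_mul_div {A ε : ℝ} (hε : 0 < ε) (hεA : ε ≤ A) :
    1 ≤ log ((1 + exp 1) / ε * A) := by
  have hA : 0 < A := hε.trans_le hεA
  rw [le_log_iff_exp_le (by positivity), div_mul_eq_mul_div, le_div_iff₀ hε]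
  nlinarith [exp_pos 1]

variable {ε g s : ℝ}

theorem le_updateBound_of_le_one_add_sq (hε : 0 < ε) (hε1 : ε ≤ 1) (hg : 0 < g) (hg1 : g ≤ 1)
    (hs : s ≤ 1 + g ^ 2) : s ≤ updateBound ε g := by
  have hεA : ε ≤ 1 - g * (1 - ε) := by nlinarith
  have hc := one_le_log_one_add_exp_one_mul_div hε hεA
  have hL := log_add_one_sub_le_log_mul_inv (c := (1 + exp 1) / ε * (1 - g * (1 - ε)))
    (by have := hε.trans_le hεA; positivity) hg
  rw [mul_right_comm] at hL
  have hX : 2 * ε * (1 + g ^ 2) ≤ 4 * g * (1 - g * (1 - ε))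
      + log ((1 + exp 1) / ε * g⁻¹ * (1 - g * (1 - ε))) := by
    nlinarith [mul_nonneg (sub_nonneg.2 hε1) (by linarith : 0 ≤ 2 - g),
      mul_nonneg hε.le (mul_nonneg hg.le (by linarith : 0 ≤ 3 - 2 * g)),
      mul_nonneg hg.le (sub_nonneg.2 hεA)]
  have he : 1 ≤ 1 + exp (-1) := by linarith [exp_pos (-1)]
  unfold updateBound
  rw [div_mul_eq_mul_div, le_div_iff₀ (by positivity)]
  calc s * (2 * ε) ≤ 2 * ε * (1 + g ^ 2) := by nlinarith
    _ ≤ _ := hX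
    _ ≤ _ := le_mul_of_one_le_left (by nlinarith) he

theorem le_updateBound_of_mul_le (hε : 0 < ε) (hε1 : ε ≤ 1) (hg : 0 < g) (hg1 : g ≤ 1)
    (hs : 0 < s) (h : ε * s ≤ g * (1 - g * (1 - ε)) +
      (1 - ((1 - ε) * g) ^ 2) / 2 * (2 + g ^ 2 - g + log s)) :
    s ≤ updateBound ε g := by
  set A := 1 - g * (1 - ε) with hA
  set b := (1 - ((1 - ε) * g) ^ 2) / 2
  set L := log ((1 + exp 1) / ε * g⁻¹ * A)
  have hεA : ε ≤ A := by nlinarith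
  have hA1 : A ≤ 1 := by nlinarith
  have hbA : b = A * (2 - A) / 2 := by ring
  have hb0 : 0 < b := by nlinarith
  have hb_le : b ≤ A := by nlinarith
  have hb_half : b ≤ 1 / 2 := by nlinarith
  have he : 0 < 1 + exp 1 := by positivity
  have hc : 1 ≤ log ((1 + exp 1) / ε * A) := one_le_log_one_add_exp_one_mul_div hε hεA
  have hL : log ((1 + exp 1) / ε * A) + 1 - g ≤ L := by
    have := log_add_one_sub_le_log_mul_inv (c := (1 + exp 1) / ε * A)
      (by have := hε.trans_le hεA; positivity) hg
    rwa [mul_right_comm] at this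
  -- the tangent point `(1 + e) b / ε` turns `b log s` into `ε s / (1 + e)` plus a constant
  have hlogs := log_le_div_sub_one_add_log hs (by positivity : 0 < (1 + exp 1) / ε * b)
  have hbs : b * (s / ((1 + exp 1) / ε * b)) = ε * s / (1 + exp 1) := by
    field_simp
  have hlogc : b * log ((1 + exp 1) / ε * b) ≤ log ((1 + exp 1) / ε * A) / 2 :=
    calc b * log ((1 + exp 1) / ε * b) ≤ b * log ((1 + exp 1) / ε * A) := by gcongr
      _ ≤ log ((1 + exp 1) / ε * A) / 2 := by nlinarith
  have hbg : b * (1 + g ^ 2 - g) ≤ g * A + (1 - g) / 2 := by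
    nlinarith [mul_nonneg hg.le (sub_nonneg.2 hg1), mul_nonneg (sub_nonneg.2 hε1) hg.le]
  have key : ε * s * (exp 1 / (1 + exp 1)) ≤ 2 * g * A + L / 2 := by
    have : ε * s * (exp 1 / (1 + exp 1)) = ε * s - ε * s / (1 + exp 1) := by
      field_simp; ring
    nlinarith
  have hconst : (1 + exp (-1)) / (2 * ε) = 1 / (2 * (ε * (exp 1 / (1 + exp 1)))) := by
    rw [exp_neg]; field_simp; ring
  unfold updateBound
  rw [hconst, ← hA, one_div_mul_eq_div, le_div_iff₀ (by positivity)]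
  linarith

theorem pfm_update_bound
    {E : Type*} [NormedAddCommGroup E] [InnerProductSpace ℝ E]
    {m : ℕ} (y : Fin m → E) (a : ℕ → E) (k : ℕ → Fin m) (u : E)
    (R γd ε : ℝ) (T : ℕ)
    (ha0 : a 0 = 0)
    (hupd : ∀ t < T, a (t + 1) = a t + y (k t))
    (hmis : ∀ t < T, ⟪a t, y (k t)⟫_ℝ ≤ (1 - ε) * γd * ‖a t‖)
    (hR : ∀ j, ‖y j‖ ≤ R)
    (hu : ‖u‖ = 1)
    (hγ : γd > 0)
    (hmargin : ∀ j, ⟪u, y j⟫_ℝ ≥ γd)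
    (hε : 0 < ε) (hε1 : ε ≤ 1) :
    (T : ℝ) ≤ ((1 + Real.exp (-1)) / (2 * ε)) * (R ^ 2 / γd ^ 2) *
      (4 * (γd / R) * (1 - (γd / R) * (1 - ε)) +
        Real.log (((1 + Real.exp 1) / ε) * (R / γd) *
          (1 - (γd / R) * (1 - ε)))) := by
  have hγR : γd ≤ R := (hmargin (k 0)).trans <| (real_inner_le_norm u _).trans <| by
    rw [hu, one_mul]; exact hR (k 0)
  have hR0 : 0 < R := hγ.trans_le hγR
  have hg : 0 < γd / R := by positivity
  have hg1 : γd / R ≤ 1 := (div_le_one hR0).2 hγR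
  have hβ : 0 ≤ (1 - ε) * γd := mul_nonneg (by linarith) hγ.le
  have hβR : ((1 - ε) * γd) ^ 2 ≤ R ^ 2 := pow_le_pow_left₀ hβ (by nlinarith) 2
  have hnorm : ∀ t ≤ T, γd * t ≤ ‖a t‖ := fun t ht =>
    (mul_le_inner_of_margin ha0 hupd (fun t _ => hmargin (k t)) t ht).trans <| by
      simpa [hu] using real_inner_le_norm u (a t)
  have hstep : ∀ t < T, ‖a (t + 1)‖ ^ 2 ≤ (‖a t‖ + (1 - ε) * γd) ^ 2 + (R ^ 2 - ((1 - ε) * γd) ^ 2) :=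
    fun t ht => hupd t ht ▸ norm_add_sq_le_of_inner_le (hmis t ht) (hR _)
  suffices h : (γd / R) ^ 2 * T ≤ updateBound ε (γd / R) by
    calc (T : ℝ) = R ^ 2 / γd ^ 2 * ((γd / R) ^ 2 * T) := by field_simp
      _ ≤ R ^ 2 / γd ^ 2 * updateBound ε (γd / R) := by gcongr
      _ = _ := by unfold updateBound; rw [inv_div]; ring
  rcases le_or_gt T ⌈R ^ 2 / γd ^ 2⌉₊ with hsmall | hlarge
  · refine le_updateBound_of_le_one_add_sq hε hε1 hg hg1 ?_
    have : (T : ℝ) < R ^ 2 / γd ^ 2 + 1 :=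
      (Nat.cast_le.2 hsmall).trans_lt (Nat.ceil_lt_add_one (by positivity))
    calc (γd / R) ^ 2 * T ≤ (γd / R) ^ 2 * (R ^ 2 / γd ^ 2 + 1) := by gcongr
      _ = 1 + (γd / R) ^ 2 := by field_simp
  · obtain ⟨n, rfl⟩ : ∃ n, T = n + 1 := ⟨T - 1, by omega⟩
    push_cast
    refine le_updateBound_of_mul_le hε hε1 hg hg1 (by positivity) <|
      mul_sq_le_of_mul_succ_le hγ hγR hε hε1 (by omega) ?_
    exact mul_succ_le_of_sq_succ_le (x := fun t => ‖a t‖) hβ hR0 hβR hγ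
      (Nat.one_le_ceil_iff.2 (by positivity)) (by omega) (by simp [ha0]) (fun _ => norm_nonneg _)
      hstep hnorm
end

section
/- Under the hypotheses of the perceptron with fixed margin condition (a₀=0, updates a_{t+1}=a_t+y_k with a_t·y_k ≤ (1−ε)γ_d‖a_t‖, ‖y_k‖ ≤ R, unit vector u with u·y_k ≥ γ_d > 0), for any integers t ≥ N ≥ 1 the bound ‖a_t‖ < (R²/(2γ_d))·(1/N + ln(t/N)) + (1−ε)·γ_d·(t−N) + R·N holds. -/
open scoped InnerProductSpace
open Finset Real

/-!
Since `u` has unit norm and every update gains at least `γd` along `u`, `‖a s‖ ≥ γd s`. Expanding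
`‖a s + y‖²` with the margin condition `⟪a s, y⟫ ≤ (1 - ε) γd ‖a s‖` and `‖y‖ ≤ R` then gives the
one-step growth `‖a (s + 1)‖ ≤ ‖a s‖ + (1 - ε) γd + R² / (2 γd s)`. Summing from `N` to `t`, starting
from `‖a N‖ ≤ R N`, and bounding the harmonic sum `∑_{N ≤ s < t} 1/s` strictly by
`1/N + log (t/N)` gives the claim.
-/

theorem inv_add_one_le_log_div {x : ℝ} (hx : 0 < x) : (x + 1)⁻¹ ≤ log ((x + 1) / x) :=
  calc (x + 1)⁻¹ = 1 - ((x + 1) / x)⁻¹ := by field_simp; ring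
    _ ≤ log ((x + 1) / x) := one_sub_inv_le_log_of_pos (by positivity)

theorem sum_Ico_inv_add_inv_le_inv_add_log {N t : ℕ} (hN : 1 ≤ N) (ht : N ≤ t) :
    ∑ s ∈ Ico N t, (s : ℝ)⁻¹ + (t : ℝ)⁻¹ ≤ (N : ℝ)⁻¹ + log (t / N) := by
  induction t, ht using Nat.le_induction with
  | base => simp [div_self (by positivity : (N : ℝ) ≠ 0)]
  | succ t ht ih =>
    have htpos : (0 : ℝ) < t := by exact_mod_cast hN.trans ht
    have hlog : log ((t + 1 : ℝ) / N) = log (t / N) + log ((t + 1) / t) := by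
      rw [← log_mul (by positivity) (by positivity)]
      field_simp
    rw [sum_Ico_succ_top ht, Nat.cast_succ, hlog]
    linarith [inv_add_one_le_log_div htpos]

theorem sum_Ico_inv_lt_inv_add_log {N t : ℕ} (hN : 1 ≤ N) (ht : N ≤ t) :
    ∑ s ∈ Ico N t, (s : ℝ)⁻¹ < (N : ℝ)⁻¹ + log (t / N) := by
  have htpos : (0 : ℝ) < (t : ℝ)⁻¹ := by
    have : (0 : ℝ) < t := by exact_mod_cast hN.trans ht
    positivity
  linarith [sum_Ico_inv_add_inv_le_inv_add_log hN ht]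

theorem eq_sum_range_of_increments {M : Type*} [AddCommGroup M] {a v : ℕ → M} (ha0 : a 0 = 0)
    (hupd : ∀ t, a (t + 1) = a t + v t) (t : ℕ) : a t = ∑ s ∈ range t, v s := by
  rw [eq_sum_range_sub a t, ha0, zero_add]
  exact sum_congr rfl fun s _ => by rw [hupd, add_sub_cancel_left]

theorem norm_le_mul_of_increments {M : Type*} [SeminormedAddCommGroup M] {a v : ℕ → M} {R : ℝ}
    (ha0 : a 0 = 0) (hupd : ∀ t, a (t + 1) = a t + v t) (hR : ∀ s, ‖v s‖ ≤ R) (t : ℕ) :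
    ‖a t‖ ≤ R * t := by
  rw [eq_sum_range_of_increments ha0 hupd]
  calc ‖∑ s ∈ range t, v s‖ ≤ ∑ s ∈ range t, ‖v s‖ := norm_sum_le _ _
    _ ≤ ∑ _s ∈ range t, R := sum_le_sum fun s _ => hR s
    _ = R * t := by rw [sum_const, card_range, nsmul_eq_mul, mul_comm]

section InnerProductSpace

variable {E : Type*} [NormedAddCommGroup E] [InnerProductSpace ℝ E]

theorem mul_le_norm_of_increments {a v : ℕ → E} {u : E} {γ : ℝ} (ha0 : a 0 = 0)
    (hupd : ∀ t, a (t + 1) = a t + v t) (hu : ‖u‖ ≤ 1) (hmargin : ∀ s, γ ≤ ⟪u, v s⟫_ℝ) (t : ℕ) :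
    γ * t ≤ ‖a t‖ :=
  calc γ * t = ∑ _s ∈ range t, γ := by rw [sum_const, card_range, nsmul_eq_mul, mul_comm]
    _ ≤ ∑ s ∈ range t, ⟪u, v s⟫_ℝ := sum_le_sum fun s _ => hmargin s
    _ = ⟪u, a t⟫_ℝ := by rw [eq_sum_range_of_increments ha0 hupd, inner_sum]
    _ ≤ ‖u‖ * ‖a t‖ := real_inner_le_norm _ _
    _ ≤ ‖a t‖ := mul_le_of_le_one_left (norm_nonneg _) hu

theorem norm_add_le_of_inner_le {x w : E} {c R δ : ℝ} (hc : 0 ≤ c) (hδ : 0 < δ)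
    (hδx : δ ≤ ‖x‖) (hxw : ⟪x, w⟫_ℝ ≤ c * ‖x‖) (hw : ‖w‖ ≤ R) :
    ‖x + w‖ ≤ ‖x‖ + c + R ^ 2 / (2 * δ) := by
  have hd : R ^ 2 ≤ 2 * ‖x‖ * (R ^ 2 / (2 * δ)) := by
    rw [mul_div_assoc', le_div_iff₀ (by positivity)]
    nlinarith [sq_nonneg R]
  have hsq : ‖x + w‖ ^ 2 ≤ (‖x‖ + c + R ^ 2 / (2 * δ)) ^ 2 := by
    rw [norm_add_sq_real]
    nlinarith [norm_nonneg w, sq_nonneg (c + R ^ 2 / (2 * δ))]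
  exact (pow_le_pow_iff_left₀ (norm_nonneg _) (by positivity) two_ne_zero).1 hsq

end InnerProductSpace

theorem pfm_norm_bound_general
    {E : Type*} [NormedAddCommGroup E] [InnerProductSpace ℝ E]
    {m : ℕ} (y : Fin m → E) (a : ℕ → E) (k : ℕ → Fin m) (u : E)
    (R γd ε : ℝ)
    (ha0 : a 0 = 0)
    (hupd : ∀ t : ℕ, a (t + 1) = a t + y (k t))
    (hmis : ∀ t : ℕ, ⟪a t, y (k t)⟫_ℝ ≤ (1 - ε) * γd * ‖a t‖)
    (hR : ∀ j, ‖y j‖ ≤ R)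
    (hu : ‖u‖ = 1)
    (hγ : γd > 0)
    (hmargin : ∀ j, ⟪u, y j⟫_ℝ ≥ γd)
    (hε1 : ε ≤ 1) :
    ∀ N t : ℕ, 1 ≤ N → N ≤ t →
      ‖a t‖ < (R ^ 2 / (2 * γd)) * (1 / (N : ℝ) + Real.log ((t : ℝ) / N)) +
        (1 - ε) * γd * ((t : ℝ) - N) + R * N := by
  intro N t hN ht
  have hRpos : 0 < R := by
    have := real_inner_le_norm u (y (k 0))
    rw [hu, one_mul] at this
    linarith [hmargin (k 0), hR (k 0)]
  -- the factor `1` puts the recurrence in the form taken by `discrete_gronwall_prod_general`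
  have hstep : ∀ s ≥ N,
      ‖a (s + 1)‖ ≤ 1 * ‖a s‖ + ((1 - ε) * γd + R ^ 2 / (2 * γd) * (s : ℝ)⁻¹) := by
    intro s hs
    have hspos : (0 : ℝ) < s := by exact_mod_cast hN.trans hs
    have hgrowth := norm_add_le_of_inner_le (mul_nonneg (sub_nonneg.2 hε1) hγ.le)
      (mul_pos hγ hspos) (mul_le_norm_of_increments ha0 hupd hu.le (fun s => hmargin (k s)) s)
      (hmis s) (hR (k s))
    rw [hupd, one_mul, ← add_assoc]
    convert hgrowth using 2
    field_simp
  have hsummed : ‖a t‖ ≤ ‖a N‖ + ((t : ℝ) - N) * ((1 - ε) * γd) +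
      R ^ 2 / (2 * γd) * ∑ s ∈ Ico N t, (s : ℝ)⁻¹ := by
    have := discrete_gronwall_prod_general (u := fun s => ‖a s‖) hstep (fun _ _ => zero_le_one) ht
    simpa only [prod_const_one, mul_one, sum_add_distrib, sum_const, Nat.card_Ico, nsmul_eq_mul,
      ← mul_sum, Nat.cast_sub ht, add_assoc] using this
  have hharmonic := mul_lt_mul_of_pos_left (sum_Ico_inv_lt_inv_add_log hN ht)
    (by positivity : 0 < R ^ 2 / (2 * γd))
  have hstart := norm_le_mul_of_increments ha0 hupd (fun s => hR (k s)) N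
  rw [one_div]
  linarith

theorem pfm_norm_bound
    {E : Type*} [NormedAddCommGroup E] [InnerProductSpace ℝ E]
    {m : ℕ} (y : Fin m → E) (a : ℕ → E) (k : ℕ → Fin m) (u : E)
    (R γd ε : ℝ)
    (ha0 : a 0 = 0)
    (hupd : ∀ t : ℕ, a (t + 1) = a t + y (k t))
    (hmis : ∀ t : ℕ, ⟪a t, y (k t)⟫_ℝ ≤ (1 - ε) * γd * ‖a t‖)
    (hR : ∀ j, ‖y j‖ ≤ R)
    (hu : ‖u‖ = 1)
    (hγ : γd > 0)
    (hmargin : ∀ j, ⟪u, y j⟫_ℝ ≥ γd)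
    (hε : 0 < ε) (hε1 : ε ≤ 1) :
    ∀ N t : ℕ, 1 ≤ N → N ≤ t →
      ‖a t‖ < (R ^ 2 / (2 * γd)) * (1 / (N : ℝ) + Real.log ((t : ℝ) / N)) +
        (1 - ε) * γd * ((t : ℝ) - N) + R * N :=
  pfm_norm_bound_general y a k u R γd ε ha0 hupd hmis hR hu hγ hmargin hε1
end

section
/- If δ = (1/(2ε))·R²/γ_d², α = 2·(γ_d/R)·(1 − (γ_d/R)(1−ε)) with 0 < ε ≤ 1, 0 < γ_d ≤ R, and N = 1 + ⌊α^{-1}⌋, then α·N + 1/N − ln N < 1 + 2α + ln α. -/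
theorem N_choice_inequality (R γd ε δ α : ℝ) (N : ℕ)
    (hε : 0 < ε) (hε1 : ε ≤ 1) (hγ : 0 < γd) (hγR : γd ≤ R)
    (hδ : δ = (1 / (2 * ε)) * R ^ 2 / γd ^ 2)
    (hα : α = 2 * (γd / R) * (1 - (γd / R) * (1 - ε)))
    (hN : N = 1 + ⌊α⁻¹⌋₊) :
    α * N + 1 / (N : ℝ) - Real.log N < 1 + 2 * α + Real.log α := by
  have hR : 0 < R := lt_of_lt_of_le hγ hγR
  have ht0 : 0 < γd / R := div_pos hγ hR
  have ht1 : γd / R ≤ 1 := (div_le_one hR).mpr hγR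
  have hαpos : 0 < α := by
    rw [hα]
    have h : (γd / R) * (1 - ε) ≤ 1 * (1 - ε) :=
      mul_le_mul_of_nonneg_right ht1 (by linarith)
    nlinarith
  have hNposn : 0 < N := by omega
  have hNpos : 0 < (N : ℝ) := by exact_mod_cast hNposn
  have h1 : (α⁻¹ : ℝ) < N := by
    rw [hN]; push_cast
    have := Nat.lt_floor_add_one (α⁻¹)
    linarith
  have h2 : (N : ℝ) ≤ α⁻¹ + 1 := by
    rw [hN]; push_cast
    have := Nat.floor_le (le_of_lt (inv_pos.mpr hαpos))
    linarith
  have hαN : 1 < α * N := by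
    calc (1 : ℝ) = α * α⁻¹ := (mul_inv_cancel₀ (ne_of_gt hαpos)).symm
    _ < α * N := by exact mul_lt_mul_of_pos_left h1 hαpos
  have hαN2 : α * N ≤ 1 + α := by
    calc α * (N : ℝ) ≤ α * (α⁻¹ + 1) :=
          mul_le_mul_of_nonneg_left h2 (le_of_lt hαpos)
    _ = 1 + α := by field_simp
  have hinv : 1 / (N : ℝ) < α := by
    rw [div_lt_iff₀ hNpos]
    linarith [hαN]
  have hlog : -Real.log N ≤ Real.log α := by
    have h0 : 0 ≤ Real.log (α * N) := Real.log_nonneg (le_of_lt hαN)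
    rw [Real.log_mul (ne_of_gt hαpos) (ne_of_gt hNpos)] at h0
    linarith
  linarith
end

section
/- For all real x ≥ 0 and all real ζ with 0 ≤ ζ ≤ 1, (1+x)^ζ + ζ(1−ζ)x²/2 ≥ 1 + ζ·x. -/
/-!
With `g x = (1 + x) ^ ζ + ζ (1 - ζ) x² / 2 - ζ x` we have `g 0 = 1` and
`g' y = ζ ((1 + y) ^ (ζ - 1) - (1 + (ζ - 1) y))`, which is nonnegative by Bernoulli's inequality
for the nonpositive exponent `ζ - 1`. Hence `g` is monotone on `(-1, ∞)` and `g x ≥ 1` for `x ≥ 0`.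
-/

open Real Set

theorem one_add_mul_self_le_rpow_one_add_of_nonpos {s : ℝ} (hs : -1 < s) {p : ℝ} (hp : p ≤ 0) :
    1 + p * s ≤ (1 + s) ^ p := by
  have hpos : 0 < 1 + s := by linarith
  calc 1 + p * s ≤ 1 + p * log (1 + s) := by
        gcongr 1 + ?_
        exact mul_le_mul_of_nonpos_left (by linarith [log_le_sub_one_of_pos hpos]) hp
    _ ≤ exp (log (1 + s) * p) := by linarith [add_one_le_exp (log (1 + s) * p)]
    _ = (1 + s) ^ p := (rpow_def_of_pos hpos p).symm

section SecondOrder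

variable {ζ : ℝ}

theorem hasDerivAt_rpow_one_add_add_sq_sub {y : ℝ} (hy : -1 < y) :
    HasDerivAt (fun x : ℝ => (1 + x) ^ ζ + ζ * (1 - ζ) * x ^ 2 / 2 - ζ * x)
      (ζ * ((1 + y) ^ (ζ - 1) - (1 + (ζ - 1) * y))) y := by
  have hbase : HasDerivAt (fun x : ℝ => 1 + x) 1 y := (hasDerivAt_id y).const_add 1
  refine (((hbase.rpow_const (p := ζ) (Or.inl (by linarith))).add
    (((hasDerivAt_pow 2 y).const_mul (ζ * (1 - ζ))).div_const 2)).sub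
    ((hasDerivAt_id y).const_mul ζ)).congr_deriv ?_
  push_cast
  ring

theorem monotoneOn_rpow_one_add_add_sq_sub (hζ0 : 0 ≤ ζ) (hζ1 : ζ ≤ 1) :
    MonotoneOn (fun x : ℝ => (1 + x) ^ ζ + ζ * (1 - ζ) * x ^ 2 / 2 - ζ * x) (Ioi (-1)) := by
  refine monotoneOn_of_hasDerivWithinAt_nonneg (convex_Ioi _)
    (fun y hy => (hasDerivAt_rpow_one_add_add_sq_sub hy).continuousAt.continuousWithinAt)
    (fun y hy => (hasDerivAt_rpow_one_add_add_sq_sub (interior_subset hy)).hasDerivWithinAt)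
    fun y hy => ?_
  rw [interior_Ioi] at hy
  exact mul_nonneg hζ0
    (sub_nonneg.2 (one_add_mul_self_le_rpow_one_add_of_nonpos hy (by linarith)))

end SecondOrder

theorem bernoulli_rpow_second_order (x ζ : ℝ) (hx : 0 ≤ x)
    (hζ0 : 0 ≤ ζ) (hζ1 : ζ ≤ 1) :
    (1 + x) ^ ζ + ζ * (1 - ζ) * x ^ 2 / 2 ≥ 1 + ζ * x := by
  have := monotoneOn_rpow_one_add_add_sq_sub hζ0 hζ1
    (mem_Ioi.2 (by norm_num : (-1 : ℝ) < 0)) (mem_Ioi.2 (by linarith)) hx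
  norm_num at this
  linarith
end

section
/- Suppose a_{t+1} = a_t + y_k in a real inner product space with ‖y_k‖ ≤ R, t a positive integer, a_t·y_k ≤ (1−ε)·‖a_t‖²/t with 0 < ε < 1/2. Then ‖a_{t+1}‖²/(t+1)^{2(1−ε)} − ‖a_t‖²/t^{2(1−ε)} ≤ R²/(t+1)^{2(1−ε)}. -/
/-!
Expanding the square, the margin condition gives
`‖a + y‖² ≤ ‖a‖² (1 + p / t) + R²` with `p = 2(1 − ε)`, and since `p ≥ 1` Bernoulli's
inequality gives `1 + p / t ≤ (1 + 1 / t) ^ p = (t + 1) ^ p / t ^ p`. Dividing by `(t + 1) ^ p`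
yields the descent inequality.
-/

open scoped InnerProductSpace

theorem one_add_div_le_add_one_rpow_div_rpow {t p : ℝ} (ht : 0 < t) (hp : 1 ≤ p) :
    1 + p / t ≤ (t + 1) ^ p / t ^ p := by
  have hbernoulli : 1 + p * t⁻¹ ≤ (1 + t⁻¹) ^ p :=
    one_add_mul_self_le_rpow_one_add (by linarith [inv_nonneg.mpr ht.le]) hp
  calc 1 + p / t = 1 + p * t⁻¹ := by rw [div_eq_mul_inv]
    _ ≤ (1 + t⁻¹) ^ p := hbernoulli
    _ = ((t + 1) / t) ^ p := by rw [add_div, div_self ht.ne', one_div, add_comm]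
    _ = (t + 1) ^ p / t ^ p := Real.div_rpow (by linarith) ht.le p

theorem norm_add_sq_le_of_inner_le_s13 {E : Type*} [NormedAddCommGroup E] [InnerProductSpace ℝ E]
    {a y : E} {c R : ℝ} (hR : ‖y‖ ≤ R) (hinner : ⟪a, y⟫_ℝ ≤ c * ‖a‖ ^ 2) :
    ‖a + y‖ ^ 2 ≤ ‖a‖ ^ 2 * (1 + 2 * c) + R ^ 2 := by
  have hy : ‖y‖ ^ 2 ≤ R ^ 2 := pow_le_pow_left₀ (norm_nonneg y) hR 2
  rw [norm_add_sq_real]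
  linarith

theorem div_sub_div_le_of_le_mul_div_add {A A' s u B : ℝ} (hs : 0 < s) (hu : 0 < u)
    (h : A' ≤ A * (u / s) + B) : A' / u - A / s ≤ B / u := by
  have hsplit : (A * (u / s) + B) / u = A / s + B / u := by field_simp
  have := div_le_div_of_nonneg_right h hu.le
  linarith

theorem pdm_one_step_descent_general
    {E : Type*} [NormedAddCommGroup E] [InnerProductSpace ℝ E]
    (a a' y : E) (t : ℕ) (R ε : ℝ)
    (hupd : a' = a + y)
    (hR : ‖y‖ ≤ R)
    (ht : 1 ≤ t)
    (hε2 : ε < 1 / 2)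
    (hmis : ⟪a, y⟫_ℝ ≤ (1 - ε) * ‖a‖ ^ 2 / t) :
    ‖a'‖ ^ 2 / ((t : ℝ) + 1) ^ (2 * (1 - ε)) -
      ‖a‖ ^ 2 / (t : ℝ) ^ (2 * (1 - ε)) ≤
      R ^ 2 / ((t : ℝ) + 1) ^ (2 * (1 - ε)) := by
  set p : ℝ := 2 * (1 - ε)
  have ht0 : (0 : ℝ) < t := by exact_mod_cast ht
  have hp : 1 ≤ p := by linarith
  have hgrowth : ‖a'‖ ^ 2 ≤ ‖a‖ ^ 2 * (1 + p / t) + R ^ 2 := by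
    have hinner : ⟪a, y⟫_ℝ ≤ ((1 - ε) / t) * ‖a‖ ^ 2 := by rwa [div_mul_eq_mul_div]
    rw [hupd, show 1 + p / t = 1 + 2 * ((1 - ε) / t) by ring]
    exact norm_add_sq_le_of_inner_le_s13 hR hinner
  apply div_sub_div_le_of_le_mul_div_add (Real.rpow_pos_of_pos ht0 p)
    (Real.rpow_pos_of_pos (by linarith) p)
  calc ‖a'‖ ^ 2 ≤ ‖a‖ ^ 2 * (1 + p / t) + R ^ 2 := hgrowth
    _ ≤ ‖a‖ ^ 2 * (((t : ℝ) + 1) ^ p / (t : ℝ) ^ p) + R ^ 2 := by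
      gcongr
      exact one_add_div_le_add_one_rpow_div_rpow ht0 hp

theorem pdm_one_step_descent
    {E : Type*} [NormedAddCommGroup E] [InnerProductSpace ℝ E]
    (a a' y : E) (t : ℕ) (R ε : ℝ)
    (hupd : a' = a + y)
    (hR : ‖y‖ ≤ R)
    (ht : 1 ≤ t)
    (hε : 0 < ε) (hε2 : ε < 1 / 2)
    (hmis : ⟪a, y⟫_ℝ ≤ (1 - ε) * ‖a‖ ^ 2 / t) :
    ‖a'‖ ^ 2 / ((t : ℝ) + 1) ^ (2 * (1 - ε)) -
      ‖a‖ ^ 2 / (t : ℝ) ^ (2 * (1 - ε)) ≤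
      R ^ 2 / ((t : ℝ) + 1) ^ (2 * (1 - ε)) :=
  pdm_one_step_descent_general a a' y t R ε hupd hR ht hε2 hmis
end

section
/- Let the perceptron with dynamic margin run with accuracy ε = 1/2: a₀ = 0, updates a_{t+1} = a_t + y_k with a_t·y_k ≤ (1/2)‖a_t‖²/t for t ≥ 1, ‖y_k‖ ≤ R, and some unit vector u satisfies u·y_k ≥ γ_d > 0 for all patterns. Then the number t of updates satisfies t ≤ (R²/γ_d²)·(1 + ln t), and consequently t ≤ (1+e^{-1})·(R²/γ_d²)·ln((1+e)·R²/γ_d²). -/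
/-!
Along the run, the projection `⟪u, a t⟫` grows by at least `γd` per update, so `t γd ≤ ‖a t‖`.
The update rule `2 t ⟪a t, y⟫ ≤ ‖a t‖²` gives `‖a (t+1)‖² / (t+1) ≤ ‖a t‖² / t + R² / (t+1)`, so
`‖a t‖² / t` is at most `R²` times the harmonic number `H_t ≤ 1 + ln t`. Comparing the two bounds
gives `t ≤ (R²/γd²)(1 + ln t)`, and the explicit bound follows by estimating `ln t` by its tangent
line at `t = (1 + e) R²/γd²`.
-/

open scoped InnerProductSpace

open Real

section Perceptron

variable {E : Type*} [NormedAddCommGroup E] [InnerProductSpace ℝ E]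

theorem natCast_mul_le_inner_of_le_inner {a v : ℕ → E} {u : E} {γ : ℝ} (ha0 : a 0 = 0)
    (hupd : ∀ t, a (t + 1) = a t + v t) (hv : ∀ t, γ ≤ ⟪u, v t⟫_ℝ) (t : ℕ) :
    t * γ ≤ ⟪u, a t⟫_ℝ := by
  induction t with
  | zero => simp [ha0]
  | succ n ih =>
    rw [hupd, inner_add_right, Nat.cast_succ, add_one_mul]
    exact add_le_add ih (hv n)

theorem norm_add_sq_div_le_of_inner_le {x v : E} {t R : ℝ} (ht : 0 < t)
    (hxv : ⟪x, v⟫_ℝ ≤ 1 / 2 * ‖x‖ ^ 2 / t) (hv : ‖v‖ ≤ R) :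
    ‖x + v‖ ^ 2 / (t + 1) ≤ ‖x‖ ^ 2 / t + R ^ 2 / (t + 1) := by
  have hv2 : ‖v‖ ^ 2 ≤ R ^ 2 := pow_le_pow_left₀ (norm_nonneg v) hv 2
  have hexp : ‖x + v‖ ^ 2 ≤ ‖x‖ ^ 2 / t * (t + 1) + R ^ 2 := by
    rw [norm_add_sq_real]
    have : ‖x‖ ^ 2 / t * (t + 1) = ‖x‖ ^ 2 + 2 * (1 / 2 * ‖x‖ ^ 2 / t) := by
      field_simp
    linarith
  calc ‖x + v‖ ^ 2 / (t + 1) ≤ (‖x‖ ^ 2 / t * (t + 1) + R ^ 2) / (t + 1) := by gcongr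
    _ = ‖x‖ ^ 2 / t + R ^ 2 / (t + 1) := by field_simp

theorem norm_sq_div_le_mul_harmonic {a v : ℕ → E} {R : ℝ} (ha0 : a 0 = 0)
    (hupd : ∀ t, a (t + 1) = a t + v t)
    (hmis : ∀ t : ℕ, 1 ≤ t → ⟪a t, v t⟫_ℝ ≤ 1 / 2 * ‖a t‖ ^ 2 / t)
    (hR : ∀ t, ‖v t‖ ≤ R) (t : ℕ) :
    ‖a t‖ ^ 2 / t ≤ R ^ 2 * harmonic t := by
  induction t with
  | zero => simp
  | succ n ih =>
    rw [hupd, harmonic_succ, Rat.cast_add, Rat.cast_inv, Rat.cast_natCast, mul_add,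
      ← div_eq_mul_inv, Nat.cast_succ]
    rcases Nat.eq_zero_or_pos n with rfl | hn
    · simpa [ha0] using pow_le_pow_left₀ (norm_nonneg _) (hR 0) 2
    · have hstep := norm_add_sq_div_le_of_inner_le (Nat.cast_pos.mpr hn) (hmis n hn) (hR n)
      linarith

end Perceptron

theorem le_mul_add_log_of_le_mul_one_add_add_log {t δ C : ℝ} (ht : 0 < t) (hδ : 0 < δ)
    (h : t ≤ δ * (1 + C + log t)) :
    t ≤ (1 + exp (-1)) * δ * (C + log ((1 + exp 1) * δ)) := by
  set S := (1 + exp 1) * δ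
  have hS : 0 < S := by positivity
  have hlog : log t ≤ t / S + log S - 1 := by
    have := log_le_sub_one_of_pos (div_pos ht hS)
    rw [log_div ht.ne' hS.ne'] at this
    linarith
  have hδS : δ * (t / S) = t / (1 + exp 1) := by
    simp only [S]
    field_simp
  have hmain : t * exp 1 ≤ δ * (C + log S) * (1 + exp 1) := by
    have := mul_le_mul_of_nonneg_left hlog hδ.le
    have : t / (1 + exp 1) * (1 + exp 1) = t := div_mul_cancel₀ _ (by positivity)
    nlinarith [exp_pos 1]
  calc t ≤ δ * (C + log S) * (1 + exp 1) / exp 1 := (le_div_iff₀ (exp_pos 1)).mpr hmain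
    _ = (1 + exp (-1)) * δ * (C + log S) := by
      rw [exp_neg]
      field_simp
      ring

theorem pdm_bound_eps_half
    {E : Type*} [NormedAddCommGroup E] [InnerProductSpace ℝ E]
    {m : ℕ} (y : Fin m → E) (a : ℕ → E) (k : ℕ → Fin m) (u : E)
    (R γd : ℝ)
    (ha0 : a 0 = 0)
    (hupd : ∀ t : ℕ, a (t + 1) = a t + y (k t))
    (hmis : ∀ t : ℕ, 1 ≤ t → ⟪a t, y (k t)⟫_ℝ ≤ (1 / 2) * ‖a t‖ ^ 2 / t)
    (hR : ∀ j, ‖y j‖ ≤ R)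
    (hu : ‖u‖ = 1)
    (hγ : γd > 0)
    (hγR : γd ≤ R)
    (hmargin : ∀ j, ⟪u, y j⟫_ℝ ≥ γd) :
    ∀ t : ℕ, 1 ≤ t →
      ((t : ℝ) ≤ (R ^ 2 / γd ^ 2) * (1 + Real.log t)) ∧
      ((t : ℝ) ≤ (1 + Real.exp (-1)) * (R ^ 2 / γd ^ 2) *
        Real.log ((1 + Real.exp 1) * R ^ 2 / γd ^ 2)) := by
  intro t ht
  have htpos : (0 : ℝ) < t := by exact_mod_cast ht
  have hlower : t * γd ≤ ‖a t‖ := by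
    have := real_inner_le_norm u (a t)
    rw [hu, one_mul] at this
    exact (natCast_mul_le_inner_of_le_inner ha0 hupd (fun t ↦ hmargin (k t)) t).trans this
  have hupper : ‖a t‖ ^ 2 / t ≤ R ^ 2 * (1 + log t) :=
    (norm_sq_div_le_mul_harmonic ha0 hupd hmis (fun t ↦ hR (k t)) t).trans
      (mul_le_mul_of_nonneg_left (harmonic_le_one_add_log t) (sq_nonneg R))
  have hfirst : (t : ℝ) ≤ R ^ 2 / γd ^ 2 * (1 + log t) := by
    rw [div_mul_eq_mul_div, le_div_iff₀ (by positivity)]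
    rw [div_le_iff₀ htpos] at hupper
    nlinarith [mul_nonneg htpos.le hγ.le]
  refine ⟨hfirst, ?_⟩
  have hδ : 0 < R ^ 2 / γd ^ 2 := by have := hγ.trans_le hγR; positivity
  simpa [mul_div_assoc] using
    le_mul_add_log_of_le_mul_one_add_add_log (C := 0) htpos hδ (by simpa using hfirst)
end

section
/- Suppose at convergence the perceptron with dynamic margin with accuracy 0 < ε < 1 has weight vector a (after t_c > 0 updates) such that every pattern y_k satisfies a·y_k > (1−ε)‖a‖²/t_c, and γ_d = max over unit vectors u' of min_k u'·y_k > 0. Then the achieved directional margin γ'_d = min_k (a/‖a‖)·y_k satisfies γ'_d ≥ (1−ε)·γ_d, i.e., the solution is ε-accurate; moreover ‖a‖/t_c < γ_d/(1−ε). -/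
/-!
Dividing the convergence condition by `‖a‖` shows that every normalized margin of `a` exceeds
`(1 - ε) ‖a‖ / t_c`. The lower bound `‖a‖ / t_c ≥ γ_d` turns this into the accuracy claim, and
comparing it with a pattern on which the unit vector `a / ‖a‖` has margin at most `γ_d` gives
the bound on `‖a‖ / t_c`.
-/

open scoped InnerProductSpace

section
variable {E : Type*} [NormedAddCommGroup E] [InnerProductSpace ℝ E]

lemma ne_zero_of_mul_norm_sq_lt_inner {a y : E} {c : ℝ} (h : c * ‖a‖ ^ 2 < ⟪a, y⟫_ℝ) :
    a ≠ 0 := by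
  rintro rfl
  simp at h

lemma mul_norm_lt_inner_inv_norm_smul {a y : E} {c : ℝ} (h : c * ‖a‖ ^ 2 < ⟪a, y⟫_ℝ) :
    c * ‖a‖ < ⟪‖a‖⁻¹ • a, y⟫_ℝ := by
  have ha : 0 < ‖a‖ := norm_pos_iff.2 (ne_zero_of_mul_norm_sq_lt_inner h)
  rw [real_inner_smul_left]
  calc c * ‖a‖ = ‖a‖⁻¹ * (c * ‖a‖ ^ 2) := by field_simp
    _ < ‖a‖⁻¹ * ⟪a, y⟫_ℝ := mul_lt_mul_of_pos_left h (inv_pos.2 ha)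

end

theorem pdm_convergence_accuracy_general
    {E : Type*} [NormedAddCommGroup E] [InnerProductSpace ℝ E]
    {m : ℕ} (hm : 0 < m) (y : Fin m → E) (a : E) (tc : ℕ) (γd ε : ℝ)
    (hε1 : ε < 1)
    (hmax : ∀ u' : E, ‖u'‖ = 1 → ∃ j, ⟪u', y j⟫_ℝ ≤ γd)
    (hconv : ∀ j, ⟪a, y j⟫_ℝ > (1 - ε) * ‖a‖ ^ 2 / tc)
    (hlow : ‖a‖ / tc ≥ γd) :
    ((1 - ε) * γd ≤
      Finset.univ.inf' (Finset.univ_nonempty_iff.mpr ⟨⟨0, hm⟩⟩)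
        (fun j => ⟪‖a‖⁻¹ • a, y j⟫_ℝ)) ∧
    ‖a‖ / tc < γd / (1 - ε) := by
  have hconv' (j : Fin m) : (1 - ε) / tc * ‖a‖ ^ 2 < ⟪a, y j⟫_ℝ := by
    rw [div_mul_eq_mul_div]
    exact hconv j
  have hmargin (j : Fin m) : (1 - ε) * (‖a‖ / tc) < ⟪‖a‖⁻¹ • a, y j⟫_ℝ := by
    calc (1 - ε) * (‖a‖ / tc) = (1 - ε) / tc * ‖a‖ := by ring
      _ < ⟪‖a‖⁻¹ • a, y j⟫_ℝ := mul_norm_lt_inner_inv_norm_smul (hconv' j)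
  have ha : a ≠ 0 := ne_zero_of_mul_norm_sq_lt_inner (hconv' ⟨0, hm⟩)
  have hε' : 0 < 1 - ε := sub_pos.2 hε1
  refine ⟨Finset.le_inf' _ _ fun j _ => ?_, ?_⟩
  · exact (mul_le_mul_of_nonneg_left hlow hε'.le).trans (hmargin j).le
  · obtain ⟨j, hj⟩ := hmax _ (norm_smul_inv_norm (𝕜 := ℝ) ha)
    rw [lt_div_iff₀' hε']
    exact (hmargin j).trans_le hj

theorem pdm_convergence_accuracy
    {E : Type*} [NormedAddCommGroup E] [InnerProductSpace ℝ E]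
    {m : ℕ} (hm : 0 < m) (y : Fin m → E) (a : E) (tc : ℕ) (γd ε : ℝ)
    (htc : 0 < tc)
    (hε : 0 < ε) (hε1 : ε < 1)
    (hγ : γd > 0)
    (hach : ∃ u : E, ‖u‖ = 1 ∧ ∀ j, ⟪u, y j⟫_ℝ ≥ γd)
    (hmax : ∀ u' : E, ‖u'‖ = 1 → ∃ j, ⟪u', y j⟫_ℝ ≤ γd)
    (hconv : ∀ j, ⟪a, y j⟫_ℝ > (1 - ε) * ‖a‖ ^ 2 / tc)
    (hlow : ‖a‖ / tc ≥ γd) :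
    ((1 - ε) * γd ≤
      Finset.univ.inf' (Finset.univ_nonempty_iff.mpr ⟨⟨0, hm⟩⟩)
        (fun j => ⟪‖a‖⁻¹ • a, y j⟫_ℝ)) ∧
    ‖a‖ / tc < γd / (1 - ε) :=
  pdm_convergence_accuracy_general hm y a tc γd ε hε1 hmax hconv hlow
end
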